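/- Let g(x,y) = Φ((1−y)/√(1+x)) for x ≥ 0 and y ∈ ℝ, where Φ is the cumulative distribution function of the standard normal distribution. Then the family of curves {g(·,y) : y ∈ ℝ} is not contained in any finite-dimensional subspace of the real vector space of functions from [0,∞) to ℝ; that is, for every finite-dimensional subspace U of the space of functions [0,∞) → ℝ there exists y ∈ ℝ with g(·,y) ∉ U. -/

import Mathlib

open MeasureTheory

/-- The cumulative distribution function `Φ` of the standard normal distribution. -/
noncomputable def stdNormalCDF (z : ℝ) : ℝ :=
  (Real.sqrt (2 * Real.pi))⁻¹ * ∫ t in Set.Iic z, Real.exp (-t ^ 2 / 2)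

/-- The curve family `g(x,y) = Φ((1-y)/√(1+x))` from Example 3.1. -/
noncomputable def gEx (x y : ℝ) : ℝ :=
  stdNormalCDF ((1 - y) / Real.sqrt (1 + x))

lemma gauss_integrable : Integrable (fun t : ℝ => Real.exp (-t ^ 2 / 2)) := by
  have h := integrable_exp_neg_mul_sq (show (0:ℝ) < 1/2 by norm_num)
  have he : (fun t : ℝ => Real.exp (-t ^ 2 / 2)) = fun t : ℝ => Real.exp (-(1/2) * t ^ 2) := by
    funext t; ring_nf
  rw [he]; exact h

lemma hasDerivAt_stdNormalCDF (z : ℝ) :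
    HasDerivAt stdNormalCDF ((Real.sqrt (2 * Real.pi))⁻¹ * Real.exp (-z ^ 2 / 2)) z := by
  have hint := gauss_integrable
  have hrew : stdNormalCDF = fun z => (Real.sqrt (2 * Real.pi))⁻¹ *
      ((∫ t in Set.Iic (0:ℝ), Real.exp (-t ^ 2 / 2)) + ∫ t in (0:ℝ)..z, Real.exp (-t ^ 2 / 2)) := by
    funext w
    unfold stdNormalCDF
    rw [← intervalIntegral.integral_Iic_sub_Iic hint.integrableOn hint.integrableOn]
    ring
  rw [hrew]
  have hc : Continuous (fun t : ℝ => Real.exp (-t ^ 2 / 2)) := by continuity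
  have hd : HasDerivAt (fun w : ℝ => ∫ t in (0:ℝ)..w, Real.exp (-t ^ 2 / 2))
      (Real.exp (-z ^ 2 / 2)) z :=
    intervalIntegral.integral_hasDerivAt_right hint.intervalIntegrable
      (hc.stronglyMeasurableAtFilter _ _) hc.continuousAt
  exact (hd.const_add _).const_mul _

lemma expsum_hasDerivAt {m : ℕ} (e r : Fin m → ℝ) (u : ℝ) :
    HasDerivAt (fun u => ∑ i, e i * Real.exp (r i * u))
      (∑ i, e i * r i * Real.exp (r i * u)) u := by
  apply HasDerivAt.fun_sum
  intro i _
  have h := (((hasDerivAt_id u).const_mul (r i)).exp).const_mul (e i)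
  simp only [id_eq, mul_one] at h
  rw [show e i * r i * Real.exp (r i * u) = e i * (Real.exp (r i * u) * r i) by ring]
  exact h

lemma expsum_zero {m : ℕ} (e r : Fin m → ℝ) (hr : Function.Injective r)
    (h : ∀ u ∈ Set.Ioo (0:ℝ) (1/2), ∑ i, e i * Real.exp (r i * u) = 0) : ∀ i, e i = 0 := by
  have key : ∀ k : ℕ, ∀ u ∈ Set.Ioo (0:ℝ) (1/2),
      ∑ i, (e i * r i ^ k) * Real.exp (r i * u) = 0 := by
    intro k
    induction k with
    | zero => simpa using h
    | succ k ih =>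
      intro u hu
      have hev : (fun u => ∑ i, (e i * r i ^ k) * Real.exp (r i * u)) =ᶠ[nhds u]
          (fun _ => (0:ℝ)) := by
        filter_upwards [isOpen_Ioo.mem_nhds hu] with v hv using ih v hv
      have hder := (expsum_hasDerivAt (fun i => e i * r i ^ k) r u).deriv
      have h0 : deriv (fun u => ∑ i, (e i * r i ^ k) * Real.exp (r i * u)) u = 0 := by
        rw [hev.deriv_eq]; simp
      rw [hder] at h0
      calc ∑ i, (e i * r i ^ (k+1)) * Real.exp (r i * u)
          = ∑ i, (e i * r i ^ k) * r i * Real.exp (r i * u) := by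
            apply Finset.sum_congr rfl; intro i _; ring
        _ = 0 := h0
  have hvdm : ∀ j : Fin m, ∑ i, r i ^ (j : ℕ) * (e i * Real.exp (r i * (1/4))) = 0 := by
    intro j
    have hk := key (j : ℕ) (1/4) (by norm_num)
    calc ∑ i, r i ^ (j : ℕ) * (e i * Real.exp (r i * (1/4)))
        = ∑ i, (e i * r i ^ (j : ℕ)) * Real.exp (r i * (1/4)) := by
          apply Finset.sum_congr rfl; intro i _; ring
      _ = 0 := hk
  have hmul : ((Matrix.vandermonde r).transpose).mulVec (fun i => e i * Real.exp (r i * (1/4))) = 0 := by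
    funext j
    simpa [Matrix.mulVec, dotProduct, Matrix.vandermonde] using hvdm j
  have hdet : ((Matrix.vandermonde r).transpose).det ≠ 0 := by
    rw [Matrix.det_transpose]
    exact Matrix.det_vandermonde_ne_zero_iff.mpr hr
  have hz := Matrix.eq_zero_of_mulVec_eq_zero hdet hmul
  intro i
  have hi := congrFun hz i
  simp only [Pi.zero_apply, mul_eq_zero] at hi
  rcases hi with h1 | h1
  · exact h1
  · exact absurd h1 (Real.exp_ne_zero _)

/-- The family of curves `{g(·,y) : y ∈ ℝ}`, regarded as functions
`[0,∞) → ℝ`, is not contained in any finite-dimensional subspace of the real vector space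
of functions `[0,∞) → ℝ`: for every finite-dimensional subspace `U` there is `y ∈ ℝ` with
`g(·,y) ∉ U`. -/
theorem stmt13 :
    ∀ U : Submodule ℝ ({x : ℝ // 0 ≤ x} → ℝ), FiniteDimensional ℝ ↥U →
      ∃ y : ℝ, (fun x : {x : ℝ // 0 ≤ x} => gEx x.1 y) ∉ U := by
  intro U hU
  by_contra hcon
  push_neg at hcon
  set n := Module.finrank ℝ ↥U with hn
  set c : Fin (n+1) → ℝ := fun i => (i : ℝ) + 1 with hc
  have hcpos : ∀ i, 0 < c i := by
    intro i
    have : (0:ℝ) ≤ (i : ℝ) := Nat.cast_nonneg _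
    simp only [hc]; linarith
  set y : Fin (n+1) → ℝ := fun i => 1 + c i with hy
  let v : Fin (n+1) → ↥U := fun i => ⟨fun x : {x : ℝ // 0 ≤ x} => gEx x.1 (y i), hcon (y i)⟩
  have hnotli : ¬ LinearIndependent ℝ v := by
    intro hli
    have hle := hli.fintype_card_le_finrank
    simp only [Fintype.card_fin, ← hn] at hle
    omega
  rw [Fintype.not_linearIndependent_iff] at hnotli
  obtain ⟨a, hsum, i0, hi0⟩ := hnotli
  have hfun : ∀ x : {x : ℝ // 0 ≤ x}, ∑ i, a i * gEx x.1 (y i) = 0 := by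
    intro x
    have h1 := congrArg (fun w : ↥U => (w : {x : ℝ // 0 ≤ x} → ℝ) x) hsum
    simpa [v, Finset.sum_apply, Pi.smul_apply, smul_eq_mul] using h1
  -- relation as a function of t = 1/√(1+x) ∈ (0,1)
  have hH : ∀ t ∈ Set.Ioo (0:ℝ) 1, ∑ i, a i * stdNormalCDF (-(c i) * t) = 0 := by
    intro t ht
    obtain ⟨ht0, ht1⟩ := ht
    have htinv : (1:ℝ) < t⁻¹ := (one_lt_inv₀ ht0).mpr ht1
    have hx : (0:ℝ) ≤ t⁻¹ ^ 2 - 1 := by nlinarith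
    have hev := hfun ⟨t⁻¹ ^ 2 - 1, hx⟩
    have harg : ∀ i, gEx (t⁻¹ ^ 2 - 1) (y i) = stdNormalCDF (-(c i) * t) := by
      intro i
      unfold gEx
      have h1 : 1 + (t⁻¹ ^ 2 - 1) = t⁻¹ ^ 2 := by ring
      have h2 : Real.sqrt (t⁻¹ ^ 2) = t⁻¹ := Real.sqrt_sq (by positivity)
      rw [h1, h2]
      congr 1
      have h3 : (1 : ℝ) - y i = -(c i) := by simp [hy]
      rw [h3]
      field_simp
    calc ∑ i, a i * stdNormalCDF (-(c i) * t)
        = ∑ i, a i * gEx (t⁻¹ ^ 2 - 1) (y i) := by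
          apply Finset.sum_congr rfl; intro i _; rw [harg i]
      _ = 0 := hev
  -- differentiate
  set C : ℝ := (Real.sqrt (2 * Real.pi))⁻¹ with hC
  have hCpos : 0 < C := by
    rw [hC]
    have : 0 < Real.sqrt (2 * Real.pi) := Real.sqrt_pos.mpr (by positivity)
    positivity
  have hD : ∀ t ∈ Set.Ioo (0:ℝ) 1,
      ∑ i, a i * c i * Real.exp (-(-(c i) * t) ^ 2 / 2) = 0 := by
    intro t ht
    have hderS : HasDerivAt (fun t => ∑ i, a i * stdNormalCDF (-(c i) * t))
        (∑ i, a i * ((C * Real.exp (-(-(c i) * t) ^ 2 / 2)) * (-(c i) * 1))) t := by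
      apply HasDerivAt.fun_sum
      intro i _
      exact ((hasDerivAt_stdNormalCDF (-(c i) * t)).comp t
        ((hasDerivAt_id t).const_mul (-(c i)))).const_mul (a i)
    have hev : (fun t => ∑ i, a i * stdNormalCDF (-(c i) * t)) =ᶠ[nhds t]
        (fun _ => (0:ℝ)) := by
      filter_upwards [isOpen_Ioo.mem_nhds ht] with s hs using hH s hs
    have h0 : (∑ i, a i * ((C * Real.exp (-(-(c i) * t) ^ 2 / 2)) * (-(c i) * 1))) = 0 := by
      rw [← hderS.deriv, hev.deriv_eq]; simp
    have h1 : (∑ i, a i * ((C * Real.exp (-(-(c i) * t) ^ 2 / 2)) * (-(c i) * 1)))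
        = -C * ∑ i, a i * c i * Real.exp (-(-(c i) * t) ^ 2 / 2) := by
      rw [Finset.mul_sum]
      apply Finset.sum_congr rfl; intro i _; ring
    rw [h1] at h0
    rcases mul_eq_zero.mp h0 with h2 | h2
    · exact absurd h2 (neg_ne_zero.mpr hCpos.ne')
    · exact h2
  -- substitute u = t^2/2
  have hexp : ∀ u ∈ Set.Ioo (0:ℝ) (1/2),
      ∑ i, (a i * c i) * Real.exp ((-(c i) ^ 2) * u) = 0 := by
    intro u hu
    obtain ⟨hu0, hu1⟩ := hu
    set t := Real.sqrt (2 * u) with htdef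
    have ht0 : 0 < t := Real.sqrt_pos.mpr (by linarith)
    have ht1 : t < 1 := by
      have h := Real.sqrt_lt_sqrt (by linarith : (0:ℝ) ≤ 2 * u) (by linarith : 2 * u < 1)
      rw [Real.sqrt_one] at h
      rw [htdef]
      exact h
    have ht2 : t ^ 2 = 2 * u := Real.sq_sqrt (by linarith)
    have hDt := hD t ⟨ht0, ht1⟩
    calc ∑ i, (a i * c i) * Real.exp ((-(c i) ^ 2) * u)
        = ∑ i, a i * c i * Real.exp (-(-(c i) * t) ^ 2 / 2) := by
          apply Finset.sum_congr rfl; intro i _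
          congr 1
          congr 1
          rw [mul_pow, ht2]; ring
      _ = 0 := hDt
  -- exponential independence
  have hrinj : Function.Injective (fun i : Fin (n+1) => -(c i) ^ 2) := by
    intro i j hij
    simp only at hij
    have hsq : (c i) ^ 2 = (c j) ^ 2 := by linarith [neg_injective hij]
    have hcij : c i = c j := by
      have h1 : c i = Real.sqrt ((c i) ^ 2) := (Real.sqrt_sq (hcpos i).le).symm
      have h2 : c j = Real.sqrt ((c j) ^ 2) := (Real.sqrt_sq (hcpos j).le).symm
      rw [h1, h2, hsq]
    have hnat : (i : ℕ) = (j : ℕ) := by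
      have : (i : ℝ) = (j : ℝ) := by
        simp only [hc] at hcij; linarith
      exact_mod_cast this
    exact Fin.ext hnat
  have hzero := expsum_zero (fun i => a i * c i) (fun i => -(c i) ^ 2) hrinj hexp
  have ha0 : a i0 = 0 := by
    rcases mul_eq_zero.mp (hzero i0) with h1 | h1
    · exact h1
    · exact absurd h1 (hcpos i0).ne'
  exact hi0 ha0
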